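/- arXiv:1509.03812 — 2 statements merged into one kernel-verified Lean document; each statement's English description precedes it below -/
import Mathlib

section
/- Suppose H = H_1 ⊕ H_2 ⊕ ⋯ ⊕ H_l is an internal orthogonal direct sum of nonzero subspaces and there is a map κ: {1,…,d} → {1,…,l} such that a_i ∈ H_{κ(i)} and a'_i ∈ H_{κ(i)} for every i. Then for each k, the vectors {a_i : κ(i)=k} and {a'_i : κ(i)=k} form orthonormal bases of H_k, and ε(𝒜,𝒜') = max_{1≤k≤l} ε(𝒜|_{H_k}, 𝒜'|_{H_k}), where ε(𝒜|_{H_k}, 𝒜'|_{H_k}) is the state-independent error of the projective measurements on H_k given by these restricted bases (with the same pairing of indices). -/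
/-
Compressing a density operator `ρ` on `H` to `H_k` gives a positive operator of trace
`t ≤ 1`; unless `t = 0` (when `ρ` has no weight on `H_k` and the corresponding terms vanish),
`t⁻¹` times it is a density operator on `H_k` reproducing the terms `⟨a_i, ρ a_i⟩`,
`⟨a'_i, ρ a'_i⟩` with `κ i = k` up to the factor `t`. Conversely, a density operator on `H_k`
extended by zero is one on `H` with the same expectation values on `H_k`. The fibres of `κ`
span `H_k` because a vector of `H_k` is orthogonal to every `a_j` lying in another summand.
-/

open scoped ComplexInnerProductSpace

noncomputable section

variable {H : Type*} [NormedAddCommGroup H] [InnerProductSpace ℂ H] [FiniteDimensional ℂ H]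
variable {ι ι' : Type*} [Fintype ι] [Fintype ι']

/-- The rank-one projector `|v⟩⟨v|`. -/
def ketbra (v : H) : H →ₗ[ℂ] H where
  toFun x := ⟪v, x⟫ • v
  map_add' x y := by simp [inner_add_right, add_smul]
  map_smul' c x := by simp [inner_smul_right, mul_smul]

/-- A density operator: self-adjoint, positive semidefinite, trace one. -/
def IsDensity (ρ : H →ₗ[ℂ] H) : Prop :=
  LinearMap.IsSymmetric ρ ∧ (∀ x : H, 0 ≤ (⟪x, ρ x⟫).re) ∧
    LinearMap.trace ℂ H ρ = 1

/-- The state-dependent error `ε_ρ(𝒜,𝒜')`. -/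
def sdError (a a' : ι → H) (ρ : H →ₗ[ℂ] H) : ℝ :=
  ⨆ i : ι, ‖LinearMap.trace ℂ H (ρ ∘ₗ (ketbra (a i) - ketbra (a' i)))‖

/-- The state-independent error `ε(𝒜,𝒜')`. -/
def siError (a a' : ι → H) : ℝ :=
  ⨆ ρ : {ρ : H →ₗ[ℂ] H // IsDensity ρ}, sdError a a' ρ.1

/-- The operator `|b_i⟩⟨b_i| − Σ_j |⟨a'_j, b_i⟩|² |a'_j⟩⟨a'_j|`. -/
def distOp (a' : ι' → H) (b : ι → H) (i : ι) : H →ₗ[ℂ] H :=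
  ketbra (b i) - ∑ j : ι', (‖⟪a' j, b i⟫‖ ^ 2 : ℂ) • ketbra (a' j)

/-- The state-dependent disturbance `η_ρ(𝒜',ℬ)`. -/
def sdDist (a' : ι' → H) (b : ι → H) (ρ : H →ₗ[ℂ] H) : ℝ :=
  ⨆ i : ι, ‖LinearMap.trace ℂ H (ρ ∘ₗ distOp a' b i)‖

/-- The state-independent disturbance `η(𝒜',ℬ)`. -/
def siDist (a' : ι' → H) (b : ι → H) : ℝ :=
  ⨆ ρ : {ρ : H →ₗ[ℂ] H // IsDensity ρ}, sdDist a' b ρ.1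

/-- The state-independent overall error `Δ(𝒜,𝒜',ℬ)`. -/
def siOverall (a a' b : ι → H) : ℝ :=
  ⨆ ρ : {ρ : H →ₗ[ℂ] H // IsDensity ρ}, (sdError a a' ρ.1 + sdDist a' b ρ.1)


open scoped ComplexOrder

set_option linter.unusedSectionVars false

lemma ketbra_eq_starProjection {v : H} (hv : ‖v‖ = 1) :
    ketbra v = ((ℂ ∙ v).starProjection : H →ₗ[ℂ] H) := by
  ext w
  exact (Submodule.starProjection_unit_singleton ℂ hv w).symm

lemma trace_comp_ketbra (ρ : H →ₗ[ℂ] H) (v : H) :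
    LinearMap.trace ℂ H (ρ ∘ₗ ketbra v) = ⟪v, ρ v⟫ := by
  have : ρ ∘ₗ ketbra v = (InnerProductSpace.rankOne ℂ (ρ v) v : H →L[ℂ] H) := by
    ext w; simp [ketbra]
  rw [this, InnerProductSpace.trace_rankOne]

lemma sdError_eq_iSup_inner (a a' : ι → H) (ρ : H →ₗ[ℂ] H) :
    sdError a a' ρ = ⨆ i, ‖⟪a i, ρ (a i)⟫ - ⟪a' i, ρ (a' i)⟫‖ := by
  simp only [sdError, LinearMap.comp_sub, map_sub, trace_comp_ketbra]

lemma isDensity_iff {ρ : H →ₗ[ℂ] H} :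
    IsDensity ρ ↔ ρ.IsPositive ∧ LinearMap.trace ℂ H ρ = 1 := by
  simp only [IsDensity, LinearMap.IsPositive, and_assoc]
  refine and_congr_right fun _ => and_congr_left fun _ => forall_congr' fun x => ?_
  rw [inner_re_symm]
  rfl

namespace Submodule

variable (K : Submodule ℂ H)

def compress (T : H →ₗ[ℂ] H) : K →ₗ[ℂ] K :=
  (K.orthogonalProjectionOnto : H →ₗ[ℂ] K) ∘ₗ T ∘ₗ K.subtype

def extendByZero (σ : K →ₗ[ℂ] K) : H →ₗ[ℂ] H :=
  K.subtype ∘ₗ σ ∘ₗ (K.orthogonalProjectionOnto : H →ₗ[ℂ] K)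

variable {K}

lemma inner_compress (T : H →ₗ[ℂ] H) (x y : K) : ⟪x, K.compress T y⟫ = ⟪(x : H), T y⟫ :=
  K.inner_orthogonalProjectionOnto_eq_of_mem_left x (T y)

lemma trace_compress (T : H →ₗ[ℂ] H) :
    LinearMap.trace ℂ K (K.compress T) = LinearMap.trace ℂ H (T ∘ₗ K.starProjection) :=
  LinearMap.trace_comp_comm' (T ∘ₗ K.subtype) _

lemma inner_extendByZero (σ : K →ₗ[ℂ] K) (x y : H) :
    ⟪x, K.extendByZero σ y⟫ = ⟪K.orthogonalProjectionOnto x, σ (K.orthogonalProjectionOnto y)⟫ :=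
  (K.inner_orthogonalProjectionOnto_eq_of_mem_right _ x).symm

lemma inner_coe_extendByZero (σ : K →ₗ[ℂ] K) (x y : K) :
    ⟪(x : H), K.extendByZero σ y⟫ = ⟪x, σ y⟫ := by
  simp [inner_extendByZero]

lemma trace_extendByZero (σ : K →ₗ[ℂ] K) :
    LinearMap.trace ℂ H (K.extendByZero σ) = LinearMap.trace ℂ K σ := by
  rw [extendByZero, LinearMap.trace_comp_comm']
  congr 1
  ext x
  simp

end Submodule

lemma LinearMap.IsPositive.compress {T : H →ₗ[ℂ] H} (hT : T.IsPositive) (K : Submodule ℂ H) :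
    (K.compress T).IsPositive := by
  refine ⟨fun x y => ?_, fun x => ?_⟩
  · rw [← inner_conj_symm, K.inner_compress, K.inner_compress, ← hT.isSymmetric, inner_conj_symm]
  · rw [inner_re_symm, K.inner_compress]
    exact hT.re_inner_nonneg_right x

lemma LinearMap.IsPositive.extendByZero {K : Submodule ℂ H} {σ : K →ₗ[ℂ] K} (hσ : σ.IsPositive) :
    (K.extendByZero σ).IsPositive := by
  refine ⟨fun x y => ?_, fun x => ?_⟩
  · rw [← inner_conj_symm, K.inner_extendByZero, K.inner_extendByZero, ← hσ.isSymmetric,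
      inner_conj_symm]
  · rw [inner_re_symm, K.inner_extendByZero]
    exact hσ.re_inner_nonneg_right _

lemma LinearMap.IsPositive.re_trace_comp_starProjection_le {T : H →ₗ[ℂ] H} (hT : T.IsPositive)
    (K : Submodule ℂ H) :
    (LinearMap.trace ℂ H (T ∘ₗ K.starProjection)).re ≤ (LinearMap.trace ℂ H T).re := by
  have hsplit : T = T ∘ₗ K.starProjection + T ∘ₗ Kᗮ.starProjection := by
    ext x
    simp
  have hperp : 0 ≤ (LinearMap.trace ℂ H (T ∘ₗ Kᗮ.starProjection)).re := by
    rw [← Kᗮ.trace_compress]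
    exact Complex.nonneg_iff.mp (hT.compress Kᗮ).trace_nonneg |>.1
  conv_rhs => rw [hsplit]
  rw [map_add, Complex.add_re]
  linarith

lemma LinearMap.IsPositive.re_inner_le_re_trace {T : H →ₗ[ℂ] H} (hT : T.IsPositive) {v : H}
    (hv : ‖v‖ = 1) : (⟪v, T v⟫).re ≤ (LinearMap.trace ℂ H T).re := by
  rw [← trace_comp_ketbra, ketbra_eq_starProjection hv]
  exact hT.re_trace_comp_starProjection_le _

lemma Complex.eq_re_of_nonneg {z : ℂ} (hz : 0 ≤ z) : z = z.re :=
  Complex.eq_re_of_ofReal_le (r := 0) (by simpa using hz)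

lemma IsDensity.re_inner_le_one {ρ : H →ₗ[ℂ] H} (hρ : IsDensity ρ) {v : H} (hv : ‖v‖ = 1) :
    (⟪v, ρ v⟫).re ≤ 1 := by
  obtain ⟨hpos, htr⟩ := isDensity_iff.mp hρ
  simpa [htr] using hpos.re_inner_le_re_trace hv

lemma IsDensity.norm_inner_sub_le_one {ρ : H →ₗ[ℂ] H} (hρ : IsDensity ρ) {v w : H}
    (hv : ‖v‖ = 1) (hw : ‖w‖ = 1) : ‖⟪v, ρ v⟫ - ⟪w, ρ w⟫‖ ≤ 1 := by
  have hpos := (isDensity_iff.mp hρ).1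
  have hv0 : 0 ≤ (⟪v, ρ v⟫).re := hpos.re_inner_nonneg_right v
  have hw0 : 0 ≤ (⟪w, ρ w⟫).re := hpos.re_inner_nonneg_right w
  rw [Complex.eq_re_of_nonneg (hpos.inner_nonneg_right v),
    Complex.eq_re_of_nonneg (hpos.inner_nonneg_right w), ← Complex.ofReal_sub, Complex.norm_real,
    Real.norm_eq_abs, abs_le]
  constructor <;> linarith [hρ.re_inner_le_one hv, hρ.re_inner_le_one hw]

lemma sdError_nonneg (a a' : ι → H) (ρ : H →ₗ[ℂ] H) : 0 ≤ sdError a a' ρ :=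
  Real.iSup_nonneg fun _ => norm_nonneg _

lemma norm_inner_sub_le_sdError (a a' : ι → H) (ρ : H →ₗ[ℂ] H) (i : ι) :
    ‖⟪a i, ρ (a i)⟫ - ⟪a' i, ρ (a' i)⟫‖ ≤ sdError a a' ρ := by
  rw [sdError_eq_iSup_inner]
  exact le_ciSup (f := fun i => ‖⟪a i, ρ (a i)⟫ - ⟪a' i, ρ (a' i)⟫‖) (Finite.bddAbove_range _) i

lemma siError_nonneg (a a' : ι → H) : 0 ≤ siError a a' :=
  Real.iSup_nonneg fun ρ => sdError_nonneg a a' ρ.1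

section UnitVectors

variable {a a' : ι → H} (ha : ∀ i, ‖a i‖ = 1) (ha' : ∀ i, ‖a' i‖ = 1)
include ha ha'

lemma IsDensity.sdError_le_one {ρ : H →ₗ[ℂ] H} (hρ : IsDensity ρ) : sdError a a' ρ ≤ 1 := by
  rw [sdError_eq_iSup_inner]
  exact Real.iSup_le (fun i => hρ.norm_inner_sub_le_one (ha i) (ha' i)) zero_le_one

lemma IsDensity.sdError_le_siError {ρ : H →ₗ[ℂ] H} (hρ : IsDensity ρ) :
    sdError a a' ρ ≤ siError a a' :=
  le_ciSup (f := fun ρ : {ρ // IsDensity ρ} => sdError a a' ρ.1)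
    ⟨1, Set.forall_mem_range.mpr fun ρ => ρ.2.sdError_le_one ha ha'⟩ ⟨ρ, hρ⟩

lemma LinearMap.IsPositive.norm_inner_sub_le_re_trace_mul_siError {σ : H →ₗ[ℂ] H}
    (hσ : σ.IsPositive) (i : ι) :
    ‖⟪a i, σ (a i)⟫ - ⟪a' i, σ (a' i)⟫‖ ≤ (LinearMap.trace ℂ H σ).re * siError a a' := by
  set t := (LinearMap.trace ℂ H σ).re
  have htr : LinearMap.trace ℂ H σ = t := Complex.eq_re_of_nonneg hσ.trace_nonneg
  have ht : 0 ≤ t := (Complex.nonneg_iff.mp hσ.trace_nonneg).1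
  rcases ht.eq_or_lt with ht0 | htpos
  · have hzero : ∀ v : H, ‖v‖ = 1 → ⟪v, σ v⟫ = 0 := fun v hv => by
      rw [Complex.eq_re_of_nonneg (hσ.inner_nonneg_right v),
        le_antisymm ((hσ.re_inner_le_re_trace hv).trans_eq ht0.symm)
          (hσ.re_inner_nonneg_right v), Complex.ofReal_zero]
    rw [hzero _ (ha i), hzero _ (ha' i), sub_zero, norm_zero]
    exact mul_nonneg ht (siError_nonneg a a')
  · set c : ℂ := ((t⁻¹ : ℝ) : ℂ)
    have hdens : IsDensity (c • σ) := by
      refine isDensity_iff.mpr ⟨hσ.smul_of_nonneg (Complex.zero_le_real.mpr (by positivity)), ?_⟩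
      rw [map_smul, htr, smul_eq_mul, ← Complex.ofReal_mul, inv_mul_cancel₀ htpos.ne',
        Complex.ofReal_one]
    have hscale : ∀ v : H, ⟪v, σ v⟫ = t * ⟪v, (c • σ) v⟫ := fun v => by
      rw [LinearMap.smul_apply, inner_smul_right, ← mul_assoc, ← Complex.ofReal_mul,
        mul_inv_cancel₀ htpos.ne', Complex.ofReal_one, one_mul]
    calc ‖⟪a i, σ (a i)⟫ - ⟪a' i, σ (a' i)⟫‖
        = t * ‖⟪a i, (c • σ) (a i)⟫ - ⟪a' i, (c • σ) (a' i)⟫‖ := by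
          rw [hscale, hscale (a' i), ← mul_sub, norm_mul, Complex.norm_real,
            Real.norm_of_nonneg htpos.le]
      _ ≤ t * sdError a a' (c • σ) := by gcongr; exact norm_inner_sub_le_sdError a a' _ i
      _ ≤ t * siError a a' := by gcongr; exact hdens.sdError_le_siError ha ha'

end UnitVectors

lemma IsDensity.norm_inner_sub_le_siError_of_subspace (K : Submodule ℂ H) {u u' : ι → K}
    (hu : ∀ i, ‖u i‖ = 1) (hu' : ∀ i, ‖u' i‖ = 1) {ρ : H →ₗ[ℂ] H} (hρ : IsDensity ρ) (i : ι) :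
    ‖⟪(u i : H), ρ (u i)⟫ - ⟪(u' i : H), ρ (u' i)⟫‖ ≤ siError u u' := by
  obtain ⟨hpos, htr⟩ := isDensity_iff.mp hρ
  have htrace : (LinearMap.trace ℂ K (K.compress ρ)).re ≤ 1 := by
    simpa [K.trace_compress, htr] using hpos.re_trace_comp_starProjection_le K
  simp only [← K.inner_compress]
  calc _ ≤ (LinearMap.trace ℂ K (K.compress ρ)).re * siError u u' :=
        (hpos.compress K).norm_inner_sub_le_re_trace_mul_siError hu hu' i
    _ ≤ siError u u' := mul_le_of_le_one_left (siError_nonneg u u') htrace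

lemma IsDensity.extendByZero {K : Submodule ℂ H} {σ : K →ₗ[ℂ] K} (hσ : IsDensity σ) :
    IsDensity (K.extendByZero σ) := by
  obtain ⟨hpos, htr⟩ := isDensity_iff.mp hσ
  exact isDensity_iff.mpr ⟨hpos.extendByZero, K.trace_extendByZero σ ▸ htr⟩

lemma siError_le_of_coe_eq_comp (K : Submodule ℂ H) {a a' : ι → H} (ha : ∀ i, ‖a i‖ = 1)
    (ha' : ∀ i, ‖a' i‖ = 1) {u u' : ι' → K} (e : ι' → ι) (hu : ∀ j, (u j : H) = a (e j))
    (hu' : ∀ j, (u' j : H) = a' (e j)) : siError u u' ≤ siError a a' := by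
  refine Real.iSup_le (fun σ => ?_) (siError_nonneg a a')
  have hle : sdError u u' σ.1 ≤ sdError a a' (K.extendByZero σ.1) := by
    rw [sdError_eq_iSup_inner]
    refine Real.iSup_le (fun j => ?_) (sdError_nonneg a a' _)
    rw [← K.inner_coe_extendByZero, ← K.inner_coe_extendByZero, hu, hu']
    exact norm_inner_sub_le_sdError a a' _ (e j)
  exact hle.trans (σ.2.extendByZero.sdError_le_siError ha ha')

section Fibers

variable {L : Type*} [DecidableEq L] (V : L → Submodule ℂ H) (κ : ι → L)

def restrictFiber (a : ι → H) (ha : ∀ i, a i ∈ V (κ i)) (k : L) : {i // κ i = k} → V k :=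
  fun i => ⟨a i, by have h := ha i.1; rwa [i.2] at h⟩

variable {V κ}

lemma OrthonormalBasis.exists_restrictFiber (b : OrthonormalBasis ι ℂ H)
    (horth : ∀ k k', k ≠ k' → ∀ x ∈ V k, ∀ y ∈ V k', ⟪x, y⟫ = 0)
    (hb : ∀ i, b i ∈ V (κ i)) (k : L) :
    ∃ B : OrthonormalBasis {i // κ i = k} ℂ (V k), ∀ i, (B i : H) = b i.1 := by
  have hon : Orthonormal ℂ (restrictFiber V κ b hb k) :=
    (b.orthonormal.comp _ Subtype.val_injective).codRestrict (V k) _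
  refine ⟨OrthonormalBasis.mk hon fun x _ => ?_, fun i => by simp [restrictFiber]⟩
  have hvanish : ∑ j : {j // κ j ≠ k}, ⟪b j, (x : H)⟫ • b j = 0 :=
    Finset.sum_eq_zero fun j _ => by rw [horth _ _ j.2 _ (hb j) _ x.2, zero_smul]
  have hcoe : (x : H) = ∑ j : {j // κ j = k}, ⟪b j, (x : H)⟫ • b j := by
    conv_lhs => rw [← b.sum_repr' x, ← Fintype.sum_subtype_add_sum_subtype (fun j => κ j = k)]
    rw [hvanish, add_zero]
  have hx : x = ∑ j : {j // κ j = k}, ⟪b j, (x : H)⟫ • restrictFiber V κ b hb k j :=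
    Subtype.ext (hcoe.trans (by simp [restrictFiber]))
  rw [hx]
  exact Submodule.sum_mem _ fun j _ => Submodule.smul_mem _ _ (Submodule.subset_span ⟨j, rfl⟩)

variable [Finite L] {a a' : ι → H} (ha : ∀ i, ‖a i‖ = 1) (ha' : ∀ i, ‖a' i‖ = 1)
  (hmem : ∀ i, a i ∈ V (κ i)) (hmem' : ∀ i, a' i ∈ V (κ i))
include ha ha'

lemma siError_le_iSup_restrictFiber :
    siError a a' ≤ ⨆ k, siError (restrictFiber V κ a hmem k) (restrictFiber V κ a' hmem' k) := by
  have hnonneg := Real.iSup_nonneg fun k =>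
    siError_nonneg (restrictFiber V κ a hmem k) (restrictFiber V κ a' hmem' k)
  refine Real.iSup_le (fun ρ => ?_) hnonneg
  rw [sdError_eq_iSup_inner]
  refine Real.iSup_le (fun i => ?_) hnonneg
  calc _ ≤ siError (restrictFiber V κ a hmem (κ i)) (restrictFiber V κ a' hmem' (κ i)) :=
        ρ.2.norm_inner_sub_le_siError_of_subspace (V (κ i))
          (u := restrictFiber V κ a hmem (κ i)) (u' := restrictFiber V κ a' hmem' (κ i))
          (fun j => ha j) (fun j => ha' j) ⟨i, rfl⟩
    _ ≤ _ := le_ciSup (f := fun k => siError (restrictFiber V κ a hmem k)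
          (restrictFiber V κ a' hmem' k)) (Finite.bddAbove_range _) (κ i)

lemma iSup_restrictFiber_le_siError :
    ⨆ k, siError (restrictFiber V κ a hmem k) (restrictFiber V κ a' hmem' k) ≤ siError a a' :=
  Real.iSup_le (fun k => siError_le_of_coe_eq_comp (V k) ha ha' Subtype.val
    (fun _ => rfl) (fun _ => rfl)) (siError_nonneg a a')

end Fibers

/-- reducibility of the error with respect to an orthogonal direct sum
decomposition compatible with both bases. -/
theorem error_reducibility {d l : ℕ}
    (a a' : OrthonormalBasis (Fin d) ℂ H)
    (V : Fin l → Submodule ℂ H)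
    (horth : ∀ k k', k ≠ k' → ∀ x ∈ V k, ∀ y ∈ V k', ⟪x, y⟫ = 0)
    (κ : Fin d → Fin l)
    (ha : ∀ i, a i ∈ V (κ i)) (ha' : ∀ i, a' i ∈ V (κ i)) :
    (∀ k : Fin l,
      (∃ B : OrthonormalBasis {i : Fin d // κ i = k} ℂ (V k), ∀ i, (B i : H) = a i.1) ∧
      (∃ B' : OrthonormalBasis {i : Fin d // κ i = k} ℂ (V k), ∀ i, (B' i : H) = a' i.1)) ∧
    siError (⇑a) (⇑a') = ⨆ k : Fin l,
      siError (fun i : {i : Fin d // κ i = k} => (⟨a i.1, by have h := ha i.1; rwa [i.2] at h⟩ : V k))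
              (fun i : {i : Fin d // κ i = k} => (⟨a' i.1, by have h := ha' i.1; rwa [i.2] at h⟩ : V k)) :=
  ⟨fun k => ⟨a.exists_restrictFiber horth ha k, a'.exists_restrictFiber horth ha' k⟩,
    le_antisymm (siError_le_iSup_restrictFiber a.orthonormal.1 a'.orthonormal.1 ha ha')
      (iSup_restrictFiber_le_siError a.orthonormal.1 a'.orthonormal.1 ha ha')⟩
end
end

section
/- Suppose H = H_1 ⊗ H_2 is a tensor product of finite-dimensional complex Hilbert spaces, and the bases are of product form: a'_{(m,n)} = a'¹_m ⊗ a'²_n and b_{(m,n)} = b¹_m ⊗ b²_n, where {a'¹_m}, {b¹_m} are orthonormal bases of H_1 and {a'²_n}, {b²_n} are orthonormal bases of H_2. Then η(𝒜',ℬ) ≥ η(𝒜'¹,ℬ¹), where η(𝒜'¹,ℬ¹) is the state-independent disturbance of the measurements on H_1 given by {a'¹_m} and {b¹_m}. -/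
/-!
Each disturbance operator `Dᵢ = |bᵢ⟩⟨bᵢ| - ∑ⱼ |⟪a'ⱼ, bᵢ⟫|² |a'ⱼ⟩⟨a'ⱼ|` is traceless and negative
semidefinite on `bᵢᗮ`, so it has at most one positive eigenvalue, and that eigenvalue dominates the
absolute values of all the others. Hence `|tr (ρ Dᵢ)| ≤ ⟪φ, Dᵢ φ⟫` for a top eigenvector `φ`, and
the disturbance of the first factor is attained on pure states. On the product space the pure
state `φ ⊗ b²ₙ` sees the same positive term while the subtracted term shrinks by the factor
`∑ₘ |⟪a'²ₘ, b²ₙ⟫|⁴ ≤ 1`.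
-/

open scoped ComplexInnerProductSpace

noncomputable section

variable {H : Type*} [NormedAddCommGroup H] [InnerProductSpace ℂ H] [FiniteDimensional ℂ H]
variable {ι ι' : Type*} [Fintype ι] [Fintype ι']

section

variable {E : Type*} [NormedAddCommGroup E] [InnerProductSpace ℂ E] {κ κ' : Type*} [Fintype κ']

@[simp] lemma ketbra_apply (v x : E) : ketbra v x = ⟪v, x⟫ • v := rfl

lemma inner_ketbra (v x : E) : ⟪x, ketbra v x⟫ = (‖⟪v, x⟫‖ ^ 2 : ℂ) := by
  rw [ketbra_apply, inner_smul_right, ← inner_conj_symm v x, mul_comm, Complex.mul_conj,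
    Complex.normSq_eq_norm_sq, RCLike.norm_conj, Complex.ofReal_pow]

lemma ketbra_isSymmetric (v : E) : (ketbra v).IsSymmetric := fun x y => by
  rw [ketbra_apply, ketbra_apply, inner_smul_left, inner_smul_right, inner_conj_symm, mul_comm]

lemma trace_ketbra_comp [FiniteDimensional ℂ E] (v : E) (f : E →ₗ[ℂ] E) :
    LinearMap.trace ℂ E (ketbra v ∘ₗ f) = ⟪v, f v⟫ := by
  set b := stdOrthonormalBasis ℂ E
  calc LinearMap.trace ℂ E (ketbra v ∘ₗ f) = ∑ i, ⟪v, f (⟪b i, v⟫ • b i)⟫ := by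
        rw [LinearMap.trace_eq_sum_inner _ b]
        simp [inner_smul_right, mul_comm]
    _ = ⟪v, f v⟫ := by rw [← inner_sum, ← map_sum, b.sum_repr']

lemma isDensity_ketbra [FiniteDimensional ℂ E] {w : E} (hw : ‖w‖ = 1) :
    IsDensity (ketbra w) := by
  refine ⟨ketbra_isSymmetric w, fun x => ?_, ?_⟩
  · rw [inner_ketbra, ← Complex.ofReal_pow, Complex.ofReal_re]
    positivity
  · simpa [inner_self_eq_norm_sq_to_K, hw] using trace_ketbra_comp w LinearMap.id

/-- In an eigenbasis of `f`, `tr (ρ f)` is an average of the eigenvalues of `f` with the weights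
`⟪u k, ρ (u k)⟫ ≥ 0`, which sum to `tr ρ = 1`. -/
lemma IsDensity.norm_trace_comp_le [Fintype κ] {ρ : E →ₗ[ℂ] E} (hρ : IsDensity ρ)
    (u : OrthonormalBasis κ ℂ E) {f : E →ₗ[ℂ] E} {lam : κ → ℝ}
    (hf : ∀ k, f (u k) = (lam k : ℂ) • u k) {M : ℝ} (hlam : ∀ k, |lam k| ≤ M) :
    ‖LinearMap.trace ℂ E (ρ ∘ₗ f)‖ ≤ M := by
  set p : κ → ℝ := fun k => (⟪u k, ρ (u k)⟫).re
  have hp : ∀ k, ⟪u k, ρ (u k)⟫ = p k := fun k => (hρ.1.coe_re_inner_self_apply (u k)).symm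
  have hp_sum : ∑ k, p k = 1 := by
    have htr := hρ.2.2
    rw [LinearMap.trace_eq_sum_inner _ u] at htr
    simp only [hp] at htr
    exact_mod_cast htr
  calc ‖LinearMap.trace ℂ E (ρ ∘ₗ f)‖ = ‖∑ k, (lam k : ℂ) * p k‖ := by
        rw [LinearMap.trace_eq_sum_inner _ u]
        congr 1
        refine Finset.sum_congr rfl fun k _ => ?_
        rw [LinearMap.comp_apply, hf, map_smul, inner_smul_right, hp]
    _ ≤ ∑ k, |lam k| * p k := by
        refine (norm_sum_le _ _).trans_eq (Finset.sum_congr rfl fun k _ => ?_)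
        rw [norm_mul, Complex.norm_real, Complex.norm_real, Real.norm_eq_abs, Real.norm_eq_abs,
          abs_of_nonneg (hρ.2.1 (u k))]
    _ ≤ ∑ k, M * p k :=
        Finset.sum_le_sum fun k _ => mul_le_mul_of_nonneg_right (hlam k) (hρ.2.1 (u k))
    _ = M := by rw [← Finset.mul_sum, hp_sum, mul_one]

lemma IsDensity.norm_trace_comp_le_sum_abs_eigenvalues [FiniteDimensional ℂ E]
    {ρ : E →ₗ[ℂ] E} (hρ : IsDensity ρ) {f : E →ₗ[ℂ] E} (hf : f.IsSymmetric) :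
    ‖LinearMap.trace ℂ E (ρ ∘ₗ f)‖ ≤ ∑ k, |hf.eigenvalues rfl k| :=
  hρ.norm_trace_comp_le (hf.eigenvectorBasis rfl) (hf.apply_eigenvectorBasis rfl) fun k =>
    Finset.single_le_sum (f := fun l => |hf.eigenvalues rfl l|) (fun _ _ => abs_nonneg _)
      (Finset.mem_univ k)

/-- If `lam k` and `lam l` were both positive, the combination of `u k` and `u l` orthogonal to `v`
would violate `hneg`. -/
lemma eigenvalue_nonpos_of_pos [Fintype κ] {f : E →ₗ[ℂ] E} {v : E}
    (hneg : ∀ x, ⟪v, x⟫ = 0 → (⟪x, f x⟫).re ≤ 0) (u : OrthonormalBasis κ ℂ E) {lam : κ → ℝ}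
    (hf : ∀ k, f (u k) = (lam k : ℂ) • u k) {k l : κ} (hkl : k ≠ l) (hk : 0 < lam k) :
    lam l ≤ 0 := by
  classical
  have hon := orthonormal_iff_ite.mp u.orthonormal
  have hvk : ⟪v, u k⟫ ≠ 0 := fun hvk => hk.not_ge <| by
    simpa [hf k, inner_smul_right, hon] using hneg (u k) hvk
  set x : E := ⟪v, u l⟫ • u k - ⟪v, u k⟫ • u l
  have hvx : ⟪v, x⟫ = 0 := by
    simp only [x, inner_sub_right, inner_smul_right]
    ring
  have hnorm : ∀ z : ℂ, z * starRingEnd ℂ z = (‖z‖ ^ 2 : ℝ) := fun z => by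
    rw [Complex.mul_conj, Complex.normSq_eq_norm_sq]
  have hx : (⟪x, f x⟫).re = ‖⟪v, u l⟫‖ ^ 2 * lam k + ‖⟪v, u k⟫‖ ^ 2 * lam l := by
    have : ⟪x, f x⟫ = ⟪v, u l⟫ * starRingEnd ℂ ⟪v, u l⟫ * lam k
        + ⟪v, u k⟫ * starRingEnd ℂ ⟪v, u k⟫ * lam l := by
      simp only [x, map_sub, map_smul, hf, smul_smul, inner_sub_left, inner_sub_right,
        inner_smul_left, inner_smul_right, hon, if_neg hkl, if_neg (Ne.symm hkl), if_pos]
      ring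
    rw [this, hnorm, hnorm]
    norm_cast
  have hvk_pos : 0 < ‖⟪v, u k⟫‖ ^ 2 := by positivity
  nlinarith [hneg x hvx, mul_nonneg (sq_nonneg ‖⟪v, u l⟫‖) hk.le]

lemma abs_le_of_sum_eq_zero [Fintype κ] {lam : κ → ℝ} (hsum : ∑ k, lam k = 0) {K : κ}
    (hK : ∀ k ≠ K, lam k ≤ 0) (k : κ) : |lam k| ≤ lam K := by
  classical
  have hrest : ∑ l ∈ Finset.univ.erase K, -lam l = lam K := by
    rw [Finset.sum_neg_distrib, Finset.sum_erase_eq_sub (Finset.mem_univ K), hsum]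
    ring
  have hK_nonneg : 0 ≤ lam K :=
    hrest ▸ Finset.sum_nonneg fun l hl => neg_nonneg.mpr (hK l (Finset.ne_of_mem_erase hl))
  by_cases hk : k = K
  · rw [hk, abs_of_nonneg hK_nonneg]
  rw [abs_of_nonpos (hK k hk), ← hrest]
  exact Finset.single_le_sum (fun l hl => neg_nonneg.mpr (hK l (Finset.ne_of_mem_erase hl)))
    (Finset.mem_erase.mpr ⟨hk, Finset.mem_univ k⟩)

lemma exists_norm_eq_one_forall_norm_trace_comp_le [FiniteDimensional ℂ E] [Nontrivial E]
    {f : E →ₗ[ℂ] E} (hf : f.IsSymmetric) (htr : LinearMap.trace ℂ E f = 0) {v : E}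
    (hneg : ∀ x, ⟪v, x⟫ = 0 → (⟪x, f x⟫).re ≤ 0) :
    ∃ φ : E, ‖φ‖ = 1 ∧ ∀ ρ, IsDensity ρ → ‖LinearMap.trace ℂ E (ρ ∘ₗ f)‖ ≤ (⟪φ, f φ⟫).re := by
  set u := hf.eigenvectorBasis rfl
  set lam := hf.eigenvalues rfl
  set K : Fin (Module.finrank ℂ E) := ⟨0, Module.finrank_pos⟩
  have hsum : ∑ k, lam k = 0 := by
    simpa [htr] using (hf.re_trace_eq_sum_eigenvalues rfl).symm
  have hK : ∀ k ≠ K, lam k ≤ 0 := fun k hk => by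
    by_contra! hpos
    have hKk : K ≤ k := Fin.le_def.mpr (Nat.zero_le k)
    have hK_pos := hpos.trans_le (hf.eigenvalues_antitone rfl hKk)
    exact (eigenvalue_nonpos_of_pos hneg u (hf.apply_eigenvectorBasis rfl) (Ne.symm hk)
      hK_pos).not_gt hpos
  refine ⟨u K, u.orthonormal.1 K, fun ρ hρ => ?_⟩
  have hφ : (⟪u K, f (u K)⟫).re = lam K := by
    simp [u, lam, inner_self_eq_norm_sq_to_K, (hf.eigenvectorBasis rfl).orthonormal.1 K]
  rw [hφ]
  exact hρ.norm_trace_comp_le u (hf.apply_eigenvectorBasis rfl) (abs_le_of_sum_eq_zero hsum hK)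

lemma distOp_isSymmetric (a' : κ' → E) (b : κ → E) (i : κ) : (distOp a' b i).IsSymmetric := by
  refine (ketbra_isSymmetric _).sub (LinearMap.isSymmetric_sum _ fun j _ => ?_)
  exact (ketbra_isSymmetric _).smul (by rw [← Complex.ofReal_pow, Complex.conj_ofReal])

lemma inner_distOp (a' : κ' → E) (b : κ → E) (i : κ) (x : E) :
    ⟪x, distOp a' b i x⟫
      = ((‖⟪b i, x⟫‖ ^ 2 - ∑ j, ‖⟪a' j, b i⟫‖ ^ 2 * ‖⟪a' j, x⟫‖ ^ 2 : ℝ) : ℂ) := by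
  simp only [distOp, LinearMap.sub_apply, LinearMap.sum_apply, LinearMap.smul_apply,
    inner_sub_right, inner_sum, inner_smul_right, inner_ketbra]
  push_cast
  ring

lemma trace_distOp [FiniteDimensional ℂ E] (a' : OrthonormalBasis κ' ℂ E) (b : κ → E) {i : κ}
    (hb : ‖b i‖ = 1) :
    LinearMap.trace ℂ E (distOp a' b i) = 0 := by
  have htr : ∀ v : E, LinearMap.trace ℂ E (ketbra v) = (‖v‖ ^ 2 : ℝ) := fun v => by
    simpa [inner_self_eq_norm_sq_to_K] using trace_ketbra_comp v LinearMap.id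
  have hsum := a'.sum_sq_norm_inner_right (b i)
  simp only [distOp, map_sub, map_sum, map_smul, htr, a'.orthonormal.1, hb, smul_eq_mul]
  rw [hb] at hsum
  exact_mod_cast (sub_eq_zero.mpr (by simpa using hsum.symm))

lemma re_inner_distOp_nonpos (a' : κ' → E) (b : κ → E) {i : κ} {x : E} (hx : ⟪b i, x⟫ = 0) :
    (⟪x, distOp a' b i x⟫).re ≤ 0 := by
  rw [inner_distOp, Complex.ofReal_re, hx, norm_zero, zero_pow two_ne_zero, zero_sub,
    neg_nonpos]
  positivity

lemma exists_norm_eq_one_forall_norm_trace_comp_distOp_le [FiniteDimensional ℂ E]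
    (a' : OrthonormalBasis κ' ℂ E) (b : κ → E) {i : κ} (hb : ‖b i‖ = 1) :
    ∃ φ : E, ‖φ‖ = 1 ∧ ∀ ρ, IsDensity ρ →
      ‖LinearMap.trace ℂ E (ρ ∘ₗ distOp a' b i)‖ ≤ (⟪φ, distOp a' b i φ⟫).re :=
  have : Nontrivial E := nontrivial_of_ne (b i) 0 (norm_ne_zero_iff.mp (hb ▸ one_ne_zero))
  exists_norm_eq_one_forall_norm_trace_comp_le (distOp_isSymmetric a' b i) (trace_distOp a' b hb)
    fun _ => re_inner_distOp_nonpos a' b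

lemma sdDist_nonneg (a' : κ' → E) (b : κ → E) (ρ : E →ₗ[ℂ] E) : 0 ≤ sdDist a' b ρ :=
  Real.iSup_nonneg fun _ => norm_nonneg _

lemma siDist_nonneg (a' : κ' → E) (b : κ → E) : 0 ≤ siDist a' b :=
  Real.iSup_nonneg fun _ => sdDist_nonneg a' b _

lemma norm_trace_comp_distOp_le_sdDist [Fintype κ] (a' : κ' → E) (b : κ → E) (ρ : E →ₗ[ℂ] E)
    (i : κ) :
    ‖LinearMap.trace ℂ E (ρ ∘ₗ distOp a' b i)‖ ≤ sdDist a' b ρ :=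
  le_ciSup (f := fun i => ‖LinearMap.trace ℂ E (ρ ∘ₗ distOp a' b i)‖)
    (Set.finite_range _).bddAbove i

lemma bddAbove_sdDist [Fintype κ] [FiniteDimensional ℂ E] (a' : κ' → E) (b : κ → E) :
    BddAbove (Set.range fun ρ : {ρ : E →ₗ[ℂ] E // IsDensity ρ} => sdDist a' b ρ.1) := by
  set M : κ → ℝ := fun i => ∑ k, |(distOp_isSymmetric a' b i).eigenvalues rfl k|
  refine ⟨∑ i, M i, Set.forall_mem_range.mpr fun ρ => Real.iSup_le (fun i => ?_) ?_⟩
  · exact (ρ.2.norm_trace_comp_le_sum_abs_eigenvalues _).trans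
      (Finset.single_le_sum (f := M) (fun _ _ => by positivity) (Finset.mem_univ i))
  · positivity

lemma sdDist_le_siDist [Fintype κ] [FiniteDimensional ℂ E] (a' : κ' → E) (b : κ → E)
    {ρ : E →ₗ[ℂ] E} (hρ : IsDensity ρ) :
    sdDist a' b ρ ≤ siDist a' b :=
  le_ciSup (bddAbove_sdDist a' b) ⟨ρ, hρ⟩

lemma re_inner_distOp_le_siDist [Fintype κ] [FiniteDimensional ℂ E] (a' : κ' → E) (b : κ → E)
    (i : κ) {ψ : E} (hψ : ‖ψ‖ = 1) :
    (⟪ψ, distOp a' b i ψ⟫).re ≤ siDist a' b :=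
  calc (⟪ψ, distOp a' b i ψ⟫).re
      ≤ ‖LinearMap.trace ℂ E (ketbra ψ ∘ₗ distOp a' b i)‖ := by
        rw [trace_ketbra_comp]
        exact Complex.re_le_norm _
    _ ≤ sdDist a' b (ketbra ψ) := norm_trace_comp_distOp_le_sdDist a' b _ i
    _ ≤ siDist a' b := sdDist_le_siDist a' b (isDensity_ketbra hψ)

section Product

variable {H₁ H₂ : Type*} [NormedAddCommGroup H₁] [InnerProductSpace ℂ H₁]
  [NormedAddCommGroup H₂] [InnerProductSpace ℂ H₂]
  {T : H₁ →ₗ[ℂ] H₂ →ₗ[ℂ] E}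

lemma norm_apply_apply_eq_mul (hT : ∀ x u y v, ⟪T x y, T u v⟫ = ⟪x, u⟫ * ⟪y, v⟫)
    (x : H₁) (y : H₂) : ‖T x y‖ = ‖x‖ * ‖y‖ := by
  have h := hT x x y y
  simp only [inner_self_eq_norm_sq_to_K] at h
  refine (pow_left_inj₀ (norm_nonneg _) (by positivity) two_ne_zero).mp ?_
  rw [mul_pow]
  exact_mod_cast h

/-- On `φ ⊗ b₂ n` the subtracted term is that of the first factor scaled by
`∑ₘ |⟪a'₂ m, b₂ n⟫|⁴ ≤ (∑ₘ |⟪a'₂ m, b₂ n⟫|²)² = 1`. -/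
lemma re_inner_distOp_le_re_inner_distOp_prod [FiniteDimensional ℂ H₁]
    (hT : ∀ x u y v, ⟪T x y, T u v⟫ = ⟪x, u⟫ * ⟪y, v⟫) {κ₁ κ₁' κ₂ κ₂' : Type*} [Fintype κ₁]
    [Fintype κ₁'] [Fintype κ₂] [Fintype κ₂'] (a'₁ : κ₁' → H₁) (b₁ : κ₁ → H₁)
    (a'₂ : OrthonormalBasis κ₂' ℂ H₂) (b₂ : κ₂ → H₂) (i : κ₁) {n : κ₂} (hb : ‖b₂ n‖ = 1) (φ : H₁) :
    (⟪φ, distOp a'₁ b₁ i φ⟫).re ≤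
      (⟪T φ (b₂ n), distOp (fun p : κ₁' × κ₂' => T (a'₁ p.1) (a'₂ p.2))
        (fun p : κ₁ × κ₂ => T (b₁ p.1) (b₂ p.2)) (i, n) (T φ (b₂ n))⟫).re := by
  set c : κ₂' → ℝ := fun m => ‖⟪a'₂ m, b₂ n⟫‖ ^ 2
  have hc_sum : ∑ m, c m = 1 := by simp [c, a'₂.sum_sq_norm_inner_right, hb]
  have hc_sq : ∑ m, c m ^ 2 ≤ 1 := by
    calc ∑ m, c m ^ 2 ≤ (∑ m, c m) ^ 2 :=
          Finset.sum_sq_le_sq_sum_of_nonneg fun _ _ => by positivity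
      _ = 1 := by rw [hc_sum, one_pow]
  have hprod : ∑ q : κ₁' × κ₂', ‖⟪T (a'₁ q.1) (a'₂ q.2), T (b₁ i) (b₂ n)⟫‖ ^ 2
      * ‖⟪T (a'₁ q.1) (a'₂ q.2), T φ (b₂ n)⟫‖ ^ 2
      = (∑ j, ‖⟪a'₁ j, b₁ i⟫‖ ^ 2 * ‖⟪a'₁ j, φ⟫‖ ^ 2) * ∑ m, c m ^ 2 := by
    simp only [hT, norm_mul, Fintype.sum_prod_type, Finset.sum_mul_sum, c]
    exact Finset.sum_congr rfl fun _ _ => Finset.sum_congr rfl fun _ _ => by ring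
  have hw : ⟪b₂ n, b₂ n⟫ = 1 := by simp [inner_self_eq_norm_sq_to_K, hb]
  rw [inner_distOp, inner_distOp, Complex.ofReal_re, Complex.ofReal_re, hprod, hT, hw, mul_one]
  have : 0 ≤ ∑ j, ‖⟪a'₁ j, b₁ i⟫‖ ^ 2 * ‖⟪a'₁ j, φ⟫‖ ^ 2 := by positivity
  nlinarith

end Product

end

theorem disturbance_subsystem_general {H₁ H₂ : Type*}
    [NormedAddCommGroup H₁] [InnerProductSpace ℂ H₁] [FiniteDimensional ℂ H₁]
    [NormedAddCommGroup H₂] [InnerProductSpace ℂ H₂]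
    {d₁ d₂ : ℕ} (hd : 2 ≤ d₁ * d₂)
    (T : H₁ →ₗ[ℂ] H₂ →ₗ[ℂ] H)
    (hT : ∀ (x u : H₁) (y v : H₂), ⟪T x y, T u v⟫ = ⟪x, u⟫ * ⟪y, v⟫)
    (a'1 b1 : OrthonormalBasis (Fin d₁) ℂ H₁)
    (a'2 b2 : OrthonormalBasis (Fin d₂) ℂ H₂) :
    siDist (⇑a'1) (⇑b1) ≤
      siDist (fun p : Fin d₁ × Fin d₂ => T (a'1 p.1) (a'2 p.2))
             (fun p : Fin d₁ × Fin d₂ => T (b1 p.1) (b2 p.2)) := by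
  have hd₂ : 0 < d₂ := Nat.pos_of_ne_zero fun h => by simp [h] at hd
  set n : Fin d₂ := ⟨0, hd₂⟩
  refine Real.iSup_le (fun ρ => Real.iSup_le (fun i => ?_) (siDist_nonneg _ _))
    (siDist_nonneg _ _)
  obtain ⟨φ, hφ, hmax⟩ :=
    exists_norm_eq_one_forall_norm_trace_comp_distOp_le a'1 b1 (b1.orthonormal.1 i)
  calc ‖LinearMap.trace ℂ H₁ (ρ.1 ∘ₗ distOp a'1 b1 i)‖
      ≤ (⟪φ, distOp a'1 b1 i φ⟫).re := hmax ρ.1 ρ.2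
    _ ≤ _ := re_inner_distOp_le_re_inner_distOp_prod hT a'1 b1 a'2 b2 i (b2.orthonormal.1 n) φ
    _ ≤ _ := re_inner_distOp_le_siDist _ _ (i, n) <| by
        rw [norm_apply_apply_eq_mul hT, hφ, b2.orthonormal.1 n, one_mul]

/-- for product-form measurements on a tensor product `H = H₁ ⊗ H₂`
(encoded by a bilinear map `T` that multiplies inner products and has spanning range),
the disturbance dominates the disturbance of the first factor. -/
theorem disturbance_subsystem {H₁ H₂ : Type*}
    [NormedAddCommGroup H₁] [InnerProductSpace ℂ H₁] [FiniteDimensional ℂ H₁]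
    [NormedAddCommGroup H₂] [InnerProductSpace ℂ H₂] [FiniteDimensional ℂ H₂]
    {d₁ d₂ : ℕ} (hd : 2 ≤ d₁ * d₂)
    (T : H₁ →ₗ[ℂ] H₂ →ₗ[ℂ] H)
    (hT : ∀ (x u : H₁) (y v : H₂), ⟪T x y, T u v⟫ = ⟪x, u⟫ * ⟪y, v⟫)
    (hspan : Submodule.span ℂ {z : H | ∃ x y, T x y = z} = ⊤)
    (a'1 b1 : OrthonormalBasis (Fin d₁) ℂ H₁)
    (a'2 b2 : OrthonormalBasis (Fin d₂) ℂ H₂) :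
    siDist (⇑a'1) (⇑b1) ≤
      siDist (fun p : Fin d₁ × Fin d₂ => T (a'1 p.1) (a'2 p.2))
             (fun p : Fin d₁ × Fin d₂ => T (b1 p.1) (b2 p.2)) :=
  disturbance_subsystem_general hd T hT a'1 b1 a'2 b2
end
end
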